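/- arXiv:1001.5125 — 3 statements merged into one kernel-verified Lean document; each statement's English description precedes it below -/
import Mathlib

section
/- If the alternating group Alt(n) admits a (2,3,7)-generating triple, then 2*⌊n/4⌋ + 2*⌊n/3⌋ + 6*⌊n/7⌋ ≥ 2n - 2. -/
/-!
Ree's inequality: if `σ` and `τ` generate a transitive group of permutations of `n` points, then
`c(σ) + c(τ) + c(στ) ≤ n + 2`, where `c` counts cycles (fixed points included). It is proved for
an arbitrary subgroup, with `2` replaced by twice its number of orbits, by induction on `n - c(τ)`:
write `τ = τ' * (a b)` with `c(τ') = c(τ) + 1`. Multiplying by a transposition `(a b)` merges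
the cycles of `a` and `b` if they differ and splits at most one cycle otherwise, while adjoining
`(a b)` to a subgroup merges at most two orbits, and none when `a` and `b` already share one.

An element of prime order `p` with `m` nontrivial cycles has `n - (p - 1) m` cycles and `p m ≤ n`,
and an involution in `Alt(n)` has an even number `m` of transpositions. For `x`, `y`, `xy` of
orders `2`, `3`, `7` generating the transitive group `Alt(n)`, Ree's inequality therefore reads
`2n - 2 ≤ m₂ + 2 m₃ + 6 m₇` with `m₂ ≤ 2 ⌊n/4⌋`, `m₃ ≤ ⌊n/3⌋`, `m₇ ≤ ⌊n/7⌋`.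
-/

namespace Setoid

variable {α : Type*} (r : Setoid α) (a b : α)

/-- The join of `r` with the relation identifying `a` and `b`. -/
def identify : Setoid α where
  r x y := r x y ∨ r x a ∧ r b y ∨ r x b ∧ r a y
  iseqv := by
    refine ⟨fun x => Or.inl (r.refl' x), fun h => ?_, fun h h' => ?_⟩
    · rcases h with h | ⟨h₁, h₂⟩ | ⟨h₁, h₂⟩
      exacts [Or.inl (r.symm' h), Or.inr (Or.inr ⟨r.symm' h₂, r.symm' h₁⟩),
        Or.inr (Or.inl ⟨r.symm' h₂, r.symm' h₁⟩)]
    · have htrans : ∀ {x y z}, r x y → r y z → r x z := r.trans'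
      have hsymm : ∀ {x y}, r x y → r y x := r.symm'
      grind

variable {r a b}

theorem le_identify : r ≤ r.identify a b := fun _ _ => Or.inl

theorem identify_le {s : Setoid α} (h : r ≤ s) (hab : s a b) : r.identify a b ≤ s := by
  rintro x y (hxy | ⟨hxa, hby⟩ | ⟨hxb, hay⟩)
  · exact h hxy
  · exact s.trans' (h hxa) (s.trans' hab (h hby))
  · exact s.trans' (h hxb) (s.trans' (s.symm' hab) (h hay))

theorem identify_eq_self (hab : r a b) : r.identify a b = r :=
  le_antisymm (identify_le le_rfl hab) le_identify

theorem card_quotient_le_of_le [Finite α] {s : Setoid α} (h : r ≤ s) :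
    Nat.card (Quotient s) ≤ Nat.card (Quotient r) :=
  Nat.card_le_card_of_surjective (Quotient.map' id h) fun q =>
    q.inductionOn fun x => ⟨⟦x⟧, rfl⟩

theorem card_quotient_identify_add_one [Finite α] (hab : ¬ r a b) :
    Nat.card (Quotient (r.identify a b)) + 1 = Nat.card (Quotient r) := by
  classical
  let f : α → Option (Quotient (r.identify a b)) := fun x =>
    if r x b then none else some ⟦x⟧
  have hf : ∀ x y, r x y → f x = f y := by
    intro x y hxy
    have : r x b ↔ r y b := ⟨r.trans' (r.symm' hxy), r.trans' hxy⟩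
    simp only [f, this]
    split_ifs
    · rfl
    · exact congrArg some (Quotient.sound (le_identify hxy))
  have hbij : Function.Bijective (Quotient.lift f hf) := by
    constructor
    · rintro ⟨x⟩ ⟨y⟩ hxy
      change f x = f y at hxy
      simp only [f] at hxy
      apply Quotient.sound
      split_ifs at hxy with hx hy hy
      · exact r.trans' hx (r.symm' hy)
      · rcases Quotient.exact (Option.some_injective _ hxy) with h | ⟨_, h⟩ | ⟨h, _⟩
        exacts [h, absurd (r.symm' h) hy, absurd h hx]
    · rintro (_ | q)
      · exact ⟨⟦b⟧, if_pos (r.refl' b)⟩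
      induction q using Quotient.inductionOn with | _ z => ?_
      by_cases hz : r z b
      · refine ⟨⟦a⟧, (if_neg hab).trans (congrArg some (Quotient.sound ?_))⟩
        exact Or.inr (Or.inl ⟨r.refl' a, r.symm' hz⟩)
      · exact ⟨⟦z⟧, if_neg hz⟩
  rw [← Finite.card_option, Nat.card_eq_of_bijective _ hbij]

theorem card_quotient_le_card_identify_add_one [Finite α] :
    Nat.card (Quotient r) ≤ Nat.card (Quotient (r.identify a b)) + 1 := by
  by_cases hab : r a b
  · rw [identify_eq_self hab]
    omega
  · rw [card_quotient_identify_add_one hab]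

end Setoid

open MulAction Subgroup

namespace Equiv.Perm

variable {α : Type*}

noncomputable def numCycles (σ : Perm α) : ℕ := Nat.card (Quotient (SameCycle.setoid σ))

noncomputable def numOrbits (G : Subgroup (Perm α)) : ℕ := Nat.card (orbitRel.Quotient G α)

theorem orbitRel_zpowers (σ : Perm α) : orbitRel (zpowers σ) α = SameCycle.setoid σ := by
  ext x y
  rw [orbitRel_apply, mem_orbit_iff, exists_zpowers]
  constructor <;> rintro ⟨m, hm⟩ <;> exact ⟨-m, by simp [← hm, Subgroup.smul_def, Perm.smul_def]⟩

theorem numOrbits_zpowers (σ : Perm α) : numOrbits (zpowers σ) = numCycles σ := by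
  rw [numOrbits, numCycles, orbitRel.Quotient, orbitRel_zpowers]

theorem orbitRel_le_of_le {G H : Subgroup (Perm α)} (h : G ≤ H) : orbitRel G α ≤ orbitRel H α :=
  fun _ _ ⟨g, hg⟩ => ⟨⟨g, h g.2⟩, hg⟩

theorem numOrbits_le_of_le [Finite α] {G H : Subgroup (Perm α)} (h : G ≤ H) :
    numOrbits H ≤ numOrbits G :=
  Setoid.card_quotient_le_of_le (orbitRel_le_of_le h)

theorem numOrbits_le_one [Finite α] (G : Subgroup (Perm α)) [IsPretransitive G α] :
    numOrbits G ≤ 1 :=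
  Finite.card_le_one_iff_subsingleton.mpr
    ((pretransitive_iff_subsingleton_quotient G α).mp inferInstance)

theorem numCycles_le_card [Finite α] (σ : Perm α) : numCycles σ ≤ Nat.card α :=
  Nat.card_le_card_of_surjective _ Quotient.mk_surjective

theorem orbitRel_closure_le {s : Set (Perm α)} {r : Setoid α} (h : ∀ g ∈ s, ∀ x, r (g x) x) :
    orbitRel (closure s) α ≤ r := by
  suffices ∀ g ∈ closure s, ∀ x, r (g x) x by
    rintro x y ⟨⟨g, hg⟩, rfl⟩
    exact this g hg y
  intro g hg
  induction hg using closure_induction with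
  | mem g hg => exact h g hg
  | one => exact r.refl'
  | mul g k _ _ hg hk => exact fun x => r.trans' (hg (k x)) (hk x)
  | inv g _ hg => exact fun x => r.symm' (by simpa using hg (g⁻¹ x))

theorem sameCycle_setoid_le {σ : Perm α} {r : Setoid α} (h : ∀ x, r (σ x) x) :
    SameCycle.setoid σ ≤ r := by
  rw [← orbitRel_zpowers, zpowers_eq_closure]
  exact orbitRel_closure_le (by simpa using h)

section swap

variable [DecidableEq α] {a b : α}

theorem _root_.Setoid.identify_swap_apply (r : Setoid α) (x : α) :
    r.identify a b (swap a b x) x := by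
  rcases eq_or_ne x a with rfl | hxa
  · rw [swap_apply_left]
    exact Or.inr (Or.inr ⟨r.refl' b, r.refl' x⟩)
  rcases eq_or_ne x b with rfl | hxb
  · rw [swap_apply_right]
    exact Or.inr (Or.inl ⟨r.refl' a, r.refl' x⟩)
  · rw [swap_apply_of_ne_of_ne hxa hxb]

theorem sameCycle_setoid_mul_swap_le (π : Perm α) :
    SameCycle.setoid (π * swap a b) ≤ (SameCycle.setoid π).identify a b :=
  sameCycle_setoid_le fun x =>
    (Setoid.identify _ a b).trans'
      (Setoid.le_identify (sameCycle_apply_left.mpr (SameCycle.refl π _)))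
      (Setoid.identify_swap_apply _ x)

theorem sameCycle_mul_swap_of_not_sameCycle [Finite α] {π : Perm α} (hab : ¬ π.SameCycle a b) :
    (π * swap a b).SameCycle a b := by
  -- along the `π`-cycle of `b`, which avoids `a`, the permutation `π * swap a b` agrees with
  -- `π` except at `b`; so from `(π * swap a b) a = π b` it runs along that cycle until `b`
  have key : ∀ (i : ℕ) (y : α), (π ^ i) y = b → (π * swap a b).SameCycle y b := by
    intro i
    induction i with
    | zero => rintro y rfl; rfl
    | succ i ih =>
      intro y hy
      rcases eq_or_ne y b with rfl | hyb
      · rfl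
      have hya : y ≠ a := by
        rintro rfl
        exact hab ⟨i + 1, by exact_mod_cast hy⟩
      have hπy : (π * swap a b) y = π y := by
        rw [mul_apply, swap_apply_of_ne_of_ne hya hyb]
      rw [← sameCycle_apply_left, hπy]
      exact ih _ (by rwa [pow_succ, mul_apply] at hy)
  obtain ⟨i, -, hi⟩ := (sameCycle_apply_left.mpr (SameCycle.refl π b)).exists_pow_eq'
  rw [← sameCycle_apply_left, mul_apply, swap_apply_left]
  exact key i _ hi

theorem orbitRel_closure_insert_swap_le (G : Subgroup (Perm α)) :
    orbitRel (closure (insert (swap a b) (G : Set (Perm α)))) α ≤ (orbitRel G α).identify a b := by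
  refine orbitRel_closure_le fun g hg x => ?_
  rcases hg with rfl | hg
  · exact Setoid.identify_swap_apply _ x
  · exact Setoid.le_identify ⟨⟨g, hg⟩, rfl⟩

variable [Finite α]

theorem numCycles_mul_swap_le (π : Perm α) : numCycles (π * swap a b) ≤ numCycles π + 1 := by
  have hle := sameCycle_setoid_mul_swap_le (a := a) (b := b) (π * swap a b)
  rw [mul_swap_mul_self] at hle
  exact Setoid.card_quotient_le_card_identify_add_one.trans
    (Nat.add_le_add_right (Setoid.card_quotient_le_of_le hle) 1)

theorem numCycles_mul_swap_add_one_le {π : Perm α} (hab : ¬ π.SameCycle a b) :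
    numCycles (π * swap a b) + 1 ≤ numCycles π := by
  have hmerge := sameCycle_mul_swap_of_not_sameCycle hab
  have hle := sameCycle_setoid_mul_swap_le (a := a) (b := b) (π * swap a b)
  rw [mul_swap_mul_self, Setoid.identify_eq_self hmerge] at hle
  rw [numCycles, numCycles, ← Setoid.card_quotient_identify_add_one (r := SameCycle.setoid π) hab]
  exact Nat.add_le_add_right (Setoid.card_quotient_le_of_le (Setoid.identify_le hle hmerge)) 1

theorem numCycles_lt_numCycles_mul_swap_apply {τ : Perm α} (ha : τ a ≠ a) :
    numCycles τ < numCycles (τ * swap a (τ a)) := by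
  have hfix : (τ * swap a (τ a)) (τ a) = τ a := by rw [mul_apply, swap_apply_right]
  have hsc : ¬ (τ * swap a (τ a)).SameCycle a (τ a) := fun h => ha (h.symm.eq_of_left hfix)
  simpa [mul_swap_mul_self] using numCycles_mul_swap_add_one_le hsc

theorem numOrbits_le_numOrbits_closure_insert_swap_add_one (G : Subgroup (Perm α)) :
    numOrbits G ≤ numOrbits (closure (insert (swap a b) (G : Set (Perm α)))) + 1 :=
  Setoid.card_quotient_le_card_identify_add_one.trans
    (Nat.add_le_add_right (Setoid.card_quotient_le_of_le (orbitRel_closure_insert_swap_le G)) 1)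

theorem numOrbits_le_numOrbits_closure_insert_swap {G : Subgroup (Perm α)}
    (hab : orbitRel G α a b) :
    numOrbits G ≤ numOrbits (closure (insert (swap a b) (G : Set (Perm α)))) := by
  have hle := orbitRel_closure_insert_swap_le (a := a) (b := b) G
  rw [Setoid.identify_eq_self hab] at hle
  exact Setoid.card_quotient_le_of_le hle

theorem numCycles_add_numCycles_add_numCycles_mul_le_of_mul_swap {σ τ : Perm α}
    (hτ : numCycles τ + 1 ≤ numCycles (τ * swap a b))
    (h : numCycles σ + numCycles (τ * swap a b) + numCycles (σ * (τ * swap a b)) ≤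
      Nat.card α + 2 * numOrbits (closure {σ, τ * swap a b})) :
    numCycles σ + numCycles τ + numCycles (σ * τ) ≤
      Nat.card α + 2 * numOrbits (closure {σ, τ}) := by
  set G := closure {σ, τ * swap a b}
  have hσG : σ ∈ G := subset_closure (Set.mem_insert _ _)
  have hτG : τ * swap a b ∈ G := subset_closure (Set.mem_insert_of_mem _ rfl)
  have hGH : G ≤ closure (insert (swap a b) (G : Set (Perm α))) :=
    fun _ hg => subset_closure (Set.mem_insert_of_mem _ hg)
  have hle : closure {σ, τ} ≤ closure (insert (swap a b) (G : Set (Perm α))) := by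
    rw [closure_le]
    rintro g (rfl | rfl)
    · exact hGH hσG
    · simpa using mul_mem (hGH hτG) (subset_closure (Set.mem_insert _ _))
  have hH := numOrbits_le_of_le hle
  have hστ : σ * (τ * swap a b) * swap a b = σ * τ := by rw [mul_assoc, mul_swap_mul_self]
  by_cases hsc : (σ * (τ * swap a b)).SameCycle a b
  · have hrel : orbitRel G α a b :=
      orbitRel_le_of_le (zpowers_le.mpr (mul_mem hσG hτG)) ((orbitRel_zpowers _).symm ▸ hsc)
    have h1 := numOrbits_le_numOrbits_closure_insert_swap hrel
    have h2 := numCycles_mul_swap_le (a := a) (b := b) (σ * (τ * swap a b))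
    rw [hστ] at h2
    omega
  · have h1 := numOrbits_le_numOrbits_closure_insert_swap_add_one (a := a) (b := b) G
    have h2 := numCycles_mul_swap_add_one_le hsc
    rw [hστ] at h2
    omega

end swap

theorem numCycles_add_numCycles_add_numCycles_mul_le [Finite α] [DecidableEq α]
    (σ τ : Perm α) :
    numCycles σ + numCycles τ + numCycles (σ * τ) ≤
      Nat.card α + 2 * numOrbits (closure {σ, τ}) := by
  by_cases hτ : τ = 1
  · subst hτ
    have hσ : closure {σ, 1} = zpowers σ := by
      rw [Set.pair_comm, closure_insert_one, zpowers_eq_closure]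
    have := numCycles_le_card (1 : Perm α)
    rw [hσ, numOrbits_zpowers, mul_one]
    omega
  obtain ⟨a, ha⟩ : ∃ a, τ a ≠ a := by
    by_contra! h
    exact hτ (Perm.ext h)
  exact numCycles_add_numCycles_add_numCycles_mul_le_of_mul_swap
    (numCycles_lt_numCycles_mul_swap_apply ha)
    (numCycles_add_numCycles_add_numCycles_mul_le σ (τ * swap a (τ a)))
termination_by Nat.card α - numCycles τ
decreasing_by
  have := numCycles_lt_numCycles_mul_swap_apply ha
  have := numCycles_le_card (τ * swap a (τ a))
  omega

section cycleType

variable [Fintype α] [DecidableEq α]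

theorem card_cycleType_add_card_sub_card_support_le_numCycles (σ : Perm α) :
    σ.cycleType.card + (Nat.card α - σ.support.card) ≤ numCycles σ := by
  have hne : ∀ c : σ.cycleFactorsFinset, (c : Perm α).support.Nonempty := fun c =>
    (mem_cycleFactorsFinset_iff.mp c.2).1.nonempty_support
  let pt : σ.cycleFactorsFinset → α := fun c => (hne c).choose
  have hpt : ∀ c : σ.cycleFactorsFinset, pt c ∈ (c : Perm α).support := fun c =>
    (hne c).choose_spec
  have hptσ : ∀ c, pt c ∈ σ.support := fun c => mem_cycleFactorsFinset_support_le c.2 (hpt c)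
  let φ : σ.cycleFactorsFinset ⊕ (σ.supportᶜ : Finset α) → Quotient (SameCycle.setoid σ) :=
    Sum.elim (fun c => ⟦pt c⟧) (fun x => ⟦x⟧)
  have hφ : Function.Injective φ := by
    have hfix : ∀ x : (σ.supportᶜ : Finset α), Function.IsFixedPt σ x := fun x =>
      notMem_support.mp (Finset.mem_compl.mp x.2)
    rintro (c | x) (d | y) h <;> have h := Quotient.exact h
    · refine congrArg Sum.inl (Subtype.ext ?_)
      rw [cycle_is_cycleOf (hpt c) c.2, cycle_is_cycleOf (hpt d) d.2, h.cycleOf_eq]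
    · exact absurd ((h.symm.eq_of_left (hfix y)) ▸ hptσ c) (Finset.mem_compl.mp y.2)
    · exact absurd ((h.eq_of_left (hfix x)) ▸ hptσ d) (Finset.mem_compl.mp x.2)
    · exact congrArg Sum.inr (Subtype.ext (h.eq_of_left (hfix x)))
  have hcard : σ.cycleType.card = σ.cycleFactorsFinset.card := by
    rw [cycleType_def, Multiset.card_map]
    rfl
  have := Nat.card_le_card_of_injective φ hφ
  rwa [Nat.card_sum, Nat.card_eq_fintype_card, Nat.card_eq_fintype_card, Fintype.card_coe,
    Fintype.card_coe, Finset.card_compl, ← Nat.card_eq_fintype_card, ← hcard] at this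

variable {p : ℕ} [Fact p.Prime] {σ : Perm α}

theorem card_support_eq_mul_card_cycleType (h : σ ^ p = 1) :
    σ.support.card = p * σ.cycleType.card := by
  rw [← sum_cycleType, cycleType_of_pow_prime_eq_one h, Multiset.sum_replicate,
    Multiset.card_replicate, smul_eq_mul, mul_comm]

theorem mul_card_cycleType_le_card (h : σ ^ p = 1) : p * σ.cycleType.card ≤ Nat.card α := by
  rw [← card_support_eq_mul_card_cycleType h, Nat.card_eq_fintype_card]
  exact σ.support.card_le_univ

theorem card_add_card_cycleType_le_numCycles_add (h : σ ^ p = 1) :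
    Nat.card α + σ.cycleType.card ≤ numCycles σ + p * σ.cycleType.card := by
  have := card_cycleType_add_card_sub_card_support_le_numCycles σ
  have := mul_card_cycleType_le_card h
  rw [card_support_eq_mul_card_cycleType h] at *
  omega

end cycleType

theorem even_card_cycleType_of_sq_eq_one [Fintype α] [DecidableEq α] {σ : Perm α}
    (h : σ ^ 2 = 1) (hσ : sign σ = 1) : Even σ.cycleType.card := by
  rw [sign_of_cycleType, sum_cycleType, card_support_eq_mul_card_cycleType h, pow_add, pow_mul,
    neg_one_sq, one_pow, one_mul] at hσ
  exact (neg_one_pow_eq_one_iff_even (by decide)).mp hσ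

end Equiv.Perm

open Equiv.Perm

/-- If Alt(n) admits a (2,3,7)-generating triple, then
    2⌊n/4⌋ + 2⌊n/3⌋ + 6⌊n/7⌋ ≥ 2n - 2. -/
theorem stmt_0 (n : ℕ)
    (h : ∃ x y : Equiv.Perm (Fin n),
      orderOf x = 2 ∧ orderOf y = 3 ∧ orderOf (x * y) = 7 ∧
      Subgroup.closure {x, y} = alternatingGroup (Fin n)) :
    2 * (n / 4) + 2 * (n / 3) + 6 * (n / 7) ≥ 2 * n - 2 := by
  obtain ⟨x, y, hx, hy, hxy, hgen⟩ := h
  have : Fact (Nat.Prime 7) := ⟨by norm_num⟩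
  have hx2 : x ^ 2 = 1 := hx ▸ pow_orderOf_eq_one x
  have hy3 : y ^ 3 = 1 := hy ▸ pow_orderOf_eq_one y
  have hxy7 : (x * y) ^ 7 = 1 := hxy ▸ pow_orderOf_eq_one (x * y)
  have hm7 : 0 < (x * y).cycleType.card := card_cycleType_pos.mpr fun h1 => by simp [h1] at hxy
  have h2 := mul_card_cycleType_le_card hx2
  have h3 := mul_card_cycleType_le_card hy3
  have h7 := mul_card_cycleType_le_card hxy7
  have hc2 := card_add_card_cycleType_le_numCycles_add hx2
  have hc3 := card_add_card_cycleType_le_numCycles_add hy3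
  have hc7 := card_add_card_cycleType_le_numCycles_add hxy7
  obtain ⟨k, hk⟩ := even_card_cycleType_of_sq_eq_one hx2
    (mem_alternatingGroup.mp (hgen ▸ subset_closure (Set.mem_insert x {y})))
  have hree := numCycles_add_numCycles_add_numCycles_mul_le x y
  rw [hgen] at hree
  simp only [Nat.card_fin] at *
  have := alternatingGroup.isPretransitive_of_three_le_card (Fin n) (by simp; omega)
  have := numOrbits_le_one (alternatingGroup (Fin n))
  omega
end

section
/- If x and y generate Alt(n) with x of order 2, y of order 3 and xy of order 7, and x is a product of 4k disjoint transpositions for some k, then the universal covering group (the double cover 2.Alt(n), n ≥ 8) admits a (2,3,7)-generating pair. -/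
/-!
The point is to lift `x` to an involution. Up to conjugation by an even permutation, `x = u * v`
with `u`, `v` disjoint products of `2k` transpositions and `v = τ * u * τ⁻¹` for an even `τ`.
Being even and disjoint from `u`, `v` is a product of three-cycles commuting with `u`; the
commutator of a lift of `u` with a lift of such a three-cycle is central of order dividing both
`2` and `3`, so the lifts `ũ` and `ṽ = τ̃ * ũ * τ̃⁻¹` commute, and `ṽ ^ 2 = ũ ^ 2` because `ũ ^ 2`
is central. Hence `(ũ * ṽ) ^ 2 = ũ ^ 4 = 1`.

A lift of `y` has order dividing `6`, so its fourth power has order `3`; multiplying the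
involution `a` by the central element `(a * b) ^ 7` forces `(a * b) ^ 7 = 1`. Finally a subgroup
mapping onto `Alt(n)` generates `G` together with the central kernel, so it contains every
commutator, and `G` is perfect.
-/

open Equiv Equiv.Perm Subgroup
open scoped commutatorElement

section CentralExtension

variable {G H : Type*} [Group G] [Group H] {π : G →* H}

theorem orderOf_eq_of_pow_eq_one_of_orderOf_map (f : G →* H) {g : G} {m : ℕ} (hg : g ^ m = 1)
    (hf : orderOf (f g) = m) : orderOf g = m :=
  Nat.dvd_antisymm (orderOf_dvd_of_pow_eq_one hg) (hf ▸ orderOf_map_dvd f g)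

theorem commutatorElement_mul_left_of_mem_center {g h z : G} (hz : z ∈ center G) :
    ⁅g * z, h⁆ = ⁅g, h⁆ := by
  rw [commutatorElement_def, commutatorElement_def, mul_inv_rev, mul_assoc g z h,
    ← mem_center_iff.mp hz h]
  group

theorem commutatorElement_mul_right_of_mem_center {g h z : G} (hz : z ∈ center G) :
    ⁅g, h * z⁆ = ⁅g, h⁆ := by
  rw [← inv_inj, commutatorElement_inv, commutatorElement_inv,
    commutatorElement_mul_left_of_mem_center hz]

theorem eq_top_of_map_eq_range (hcen : π.ker ≤ center G) (hperf : commutator G = ⊤)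
    {K : Subgroup G} (hK : K.map π = π.range) : K = ⊤ := by
  have hsplit : ∀ g : G, ∃ k ∈ K, ∃ z ∈ center G, g = k * z := by
    intro g
    obtain ⟨k, hk, hkg⟩ : π g ∈ K.map π := hK ▸ ⟨g, rfl⟩
    refine ⟨k, hk, k⁻¹ * g, hcen ?_, (mul_inv_cancel_left k g).symm⟩
    rw [MonoidHom.mem_ker, map_mul, map_inv, hkg, inv_mul_cancel]
  rw [eq_top_iff, ← hperf, commutator_def, commutator_le]
  rintro g₁ - g₂ -
  obtain ⟨k₁, hk₁, z₁, hz₁, rfl⟩ := hsplit g₁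
  obtain ⟨k₂, hk₂, z₂, hz₂, rfl⟩ := hsplit g₂
  rw [commutatorElement_mul_left_of_mem_center hz₁,
    commutatorElement_mul_right_of_mem_center hz₂, commutatorElement_def]
  exact mul_mem (mul_mem (mul_mem hk₁ hk₂) (inv_mem hk₁)) (inv_mem hk₂)

theorem mul_conj_sq_eq_pow_four {u t : G} (hc : Commute u (t * u * t⁻¹))
    (hu : u ^ 2 ∈ center G) : (u * (t * u * t⁻¹)) ^ 2 = u ^ 4 := by
  rw [hc.mul_pow, conj_pow, mem_center_iff.mp hu t, mul_inv_cancel_right, ← pow_add]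

theorem commute_of_commute_map_of_odd_orderOf (hcen : π.ker ≤ center G)
    (hsq : ∀ z ∈ π.ker, z ^ 2 = 1) {a c : G} (hac : Commute (π a) (π c))
    (hodd : Odd (orderOf (π c))) : Commute a c := by
  set m := orderOf (π c)
  set d := ⁅a, c⁆
  have hd : d ∈ π.ker := by
    rw [MonoidHom.mem_ker, map_commutatorElement, commutatorElement_eq_one_iff_commute.mpr hac]
  have hcm : c ^ m ∈ π.ker := by rw [MonoidHom.mem_ker, map_pow, pow_orderOf_eq_one]
  -- conjugation by `a` multiplies `c` by `d`, hence the central `c ^ m` by `d ^ m`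
  have hdm : d ^ m = 1 := by
    have hconj : a * c * a⁻¹ = d * c := by simp [d, commutatorElement_def]
    have hdc : Commute d c := (mem_center_iff.mp (hcen hd) c).symm
    have hpow := conj_pow (i := m) (a := a) (b := c)
    rw [hconj, hdc.mul_pow, mul_inv_eq_of_eq_mul (mem_center_iff.mp (hcen hcm) a)] at hpow
    simpa using hpow.symm
  obtain ⟨j, hj⟩ := hodd
  have hd1 : d = 1 := calc
    d = (d ^ 2) ^ j * d := by rw [hsq d hd, one_pow, one_mul]
    _ = d ^ m := by rw [← pow_mul, ← pow_succ, hj]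
    _ = 1 := hdm
  exact commutatorElement_eq_one_iff_commute.mp hd1

theorem commute_of_map_mem_closure (hcen : π.ker ≤ center G) (hsq : ∀ z ∈ π.ker, z ^ 2 = 1)
    {a w : G} {S : Set H}
    (hS : ∀ s ∈ S, s ∈ π.range ∧ Commute (π a) s ∧ Odd (orderOf s)) (hw : π w ∈ closure S) :
    Commute a w := by
  have hle : closure S ≤ (centralizer {a}).map π := by
    rw [closure_le]
    intro s hs
    obtain ⟨⟨c, rfl⟩, hac, hodd⟩ := hS s hs
    exact ⟨c, mem_centralizer_singleton_iff.mpr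
      (commute_of_commute_map_of_odd_orderOf hcen hsq hac hodd).eq.symm, rfl⟩
  obtain ⟨c, hc, hcw⟩ := hle hw
  have hz : c⁻¹ * w ∈ center G :=
    hcen (by rw [MonoidHom.mem_ker, map_mul, map_inv, hcw, inv_mul_cancel])
  rw [← mul_inv_cancel_left c w]
  exact Commute.mul_right (mem_centralizer_singleton_iff.mp hc).symm (mem_center_iff.mp hz a)

theorem exists_lift_pow_eq_one (hsq : ∀ z ∈ π.ker, z ^ 2 = 1) {y : H} (hy : y ∈ π.range)
    {m : ℕ} (hm : Odd m) (hym : y ^ m = 1) : ∃ b, π b = y ∧ b ^ m = 1 := by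
  obtain ⟨g, rfl⟩ := hy
  have hg : (g ^ m) ^ 2 = 1 := hsq _ (by rw [MonoidHom.mem_ker, map_pow, hym])
  obtain ⟨j, rfl⟩ := hm
  refine ⟨g ^ (2 * j + 2), ?_, ?_⟩
  · rw [map_pow, pow_succ, hym, one_mul]
  · rw [← pow_mul, mul_comm, pow_mul, show 2 * j + 2 = 2 * (j + 1) by ring, pow_mul, hg, one_pow]

theorem exists_lift_mul_pow_eq_one (hcen : π.ker ≤ center G) (hsq : ∀ z ∈ π.ker, z ^ 2 = 1)
    {a b : G} {m : ℕ} (hm : Odd m) (hab : (π a * π b) ^ m = 1) :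
    ∃ a', π a' = π a ∧ a' ^ 2 = a ^ 2 ∧ (a' * b) ^ m = 1 := by
  set e := (a * b) ^ m
  have he : e ∈ π.ker := by rw [MonoidHom.mem_ker, map_pow, map_mul, hab]
  have hcomm : ∀ g, Commute g e := fun g => mem_center_iff.mp (hcen he) g
  obtain ⟨j, rfl⟩ := hm
  refine ⟨a * e, by rw [map_mul, he, mul_one], ?_, ?_⟩
  · rw [(hcomm a).mul_pow, hsq e he, mul_one]
  · rw [mul_assoc, (hcomm b).symm.eq, ← mul_assoc, (hcomm (a * b)).mul_pow, ← pow_succ',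
      show 2 * j + 1 + 1 = 2 * (j + 1) by ring, pow_mul, hsq e he, one_pow]

end CentralExtension

namespace Equiv.Perm

variable {α : Type*} [Fintype α] [DecidableEq α]

theorem exists_disjoint_cycleType_eq {m : Multiset ℕ} (hm : ∀ a ∈ m, 2 ≤ a)
    (hcard : 2 * m.sum ≤ Fintype.card α) :
    ∃ u v : Perm α, Disjoint u v ∧ u.cycleType = m ∧ v.cycleType = m := by
  obtain ⟨u, hu⟩ := (exists_with_cycleType_iff α).mpr ⟨by omega, hm⟩
  have hfix : m.sum ≤ Fintype.card {a // a ∉ u.support} := by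
    rw [Fintype.card_subtype_compl, Fintype.card_coe, ← sum_cycleType, hu]
    omega
  obtain ⟨v, hv⟩ := (exists_with_cycleType_iff _).mpr ⟨hfix, hm⟩
  refine ⟨u, ofSubtype v, fun a => ?_, hu, by rw [cycleType_ofSubtype, hv]⟩
  by_cases ha : a ∈ u.support
  · exact Or.inr (ofSubtype_apply_of_not_mem v (not_not.mpr ha))
  · exact Or.inl (notMem_support.mp ha)

theorem exists_mem_alternatingGroup_conj_eq {σ τ : Perm α} (h : σ.cycleType = τ.cycleType)
    (heven : ∃ c ∈ σ.cycleType, Even c) :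
    ∃ ρ ∈ alternatingGroup α, ρ * σ * ρ⁻¹ = τ := by
  obtain ⟨ρ, hρ⟩ := isConj_iff.mp (isConj_of_cycleType_eq h)
  -- a cycle of even length is an odd permutation centralizing `σ`; it corrects the sign of `ρ`
  obtain ⟨t, ht, ht'⟩ : ∃ t ∈ centralizer {σ}, t ∉ alternatingGroup α := by
    rw [← SetLike.not_le_iff_exists, centralizer_le_alternating_iff]
    obtain ⟨c, hc, hce⟩ := heven
    exact fun h' => Nat.not_odd_iff_even.mpr hce (h'.1 c hc)
  by_cases hρ' : ρ ∈ alternatingGroup α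
  · exact ⟨ρ, hρ', hρ⟩
  refine ⟨ρ * t, ?_, ?_⟩
  · rw [mem_alternatingGroup] at hρ' ht' ⊢
    rw [map_mul, Int.units_ne_iff_eq_neg.mp hρ', Int.units_ne_iff_eq_neg.mp ht', neg_mul_neg,
      one_mul]
  · rw [← hρ, mul_inv_rev, mul_assoc ρ t σ, mem_centralizer_singleton_iff.mp ht]
    group

theorem mem_closure_isThreeCycle_disjoint {u v : Perm α} (huv : Disjoint u v)
    (hv : v ∈ alternatingGroup α) : v ∈ closure {c | IsThreeCycle c ∧ Disjoint u c} := by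
  have hv' : v.subtypePerm (fun _ => apply_mem_support) ∈
      closure {c : Perm {a // a ∈ v.support} | IsThreeCycle c} := by
    rw [closure_three_cycles_eq_alternating, mem_alternatingGroup]
    convert (sign_subtypePerm v (fun _ => apply_mem_support) fun _ => mem_support.mpr).trans hv
  rw [← ofSubtype_subtypePerm (f := v) (fun _ => apply_mem_support) (fun _ => mem_support.mpr)]
  have hmap := mem_map_of_mem (ofSubtype : Perm {a // a ∈ v.support} →* Perm α) hv'
  rw [MonoidHom.map_closure] at hmap
  refine closure_mono ?_ hmap
  rintro _ ⟨c, hc, rfl⟩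
  refine ⟨by rw [IsThreeCycle, cycleType_ofSubtype]; exact hc, fun a => ?_⟩
  by_cases ha : a ∈ v.support
  · exact Or.inl ((huv a).resolve_right (mem_support.mp ha))
  · exact Or.inr (ofSubtype_apply_of_not_mem c ha)

end Equiv.Perm

section CoveringOfAlternatingGroup

variable {α G : Type*} [Fintype α] [DecidableEq α] [Group G] {π : G →* Perm α}

theorem exists_involutive_lift_of_disjoint (hcen : π.ker ≤ center G)
    (hsq : ∀ z ∈ π.ker, z ^ 2 = 1) (hrange : π.range = alternatingGroup α)
    {u v τ : Perm α} (huv : Disjoint u v)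
    (hu : u ∈ alternatingGroup α) (hτ : τ ∈ alternatingGroup α) (hτu : τ * u * τ⁻¹ = v)
    (hu2 : u ^ 2 = 1) : ∃ g, π g = u * v ∧ g ^ 2 = 1 := by
  rw [← hrange] at hu hτ
  obtain ⟨u', rfl⟩ := hu
  obtain ⟨t', rfl⟩ := hτ
  subst hτu
  have hcomm : Commute u' (t' * u' * t'⁻¹) := by
    refine commute_of_map_mem_closure hcen hsq (S := {c | IsThreeCycle c ∧ Disjoint (π u') c})
      ?_ ?_
    · rintro c ⟨hc, hdisj⟩
      refine ⟨hrange ▸ hc.mem_alternatingGroup, hdisj.commute, ?_⟩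
      rw [hc.orderOf]
      decide
    · have hv : π (t' * u' * t'⁻¹) ∈ alternatingGroup α := hrange ▸ ⟨_, rfl⟩
      simpa using mem_closure_isThreeCycle_disjoint huv (by simpa using hv)
  have hu' : u' ^ 2 ∈ π.ker := by rw [MonoidHom.mem_ker, map_pow, hu2]
  refine ⟨u' * (t' * u' * t'⁻¹), by simp, ?_⟩
  rw [mul_conj_sq_eq_pow_four hcomm (hcen hu'), show 4 = 2 * 2 by rfl, pow_mul, hsq _ hu']

theorem exists_involutive_lift_of_cycleType_eq_replicate (hcen : π.ker ≤ center G)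
    (hsq : ∀ z ∈ π.ker, z ^ 2 = 1) (hrange : π.range = alternatingGroup α) {x : Perm α} {k : ℕ}
    (hx : x.cycleType = Multiset.replicate (4 * k) 2) : ∃ a, π a = x ∧ a ^ 2 = 1 := by
  rcases Nat.eq_zero_or_pos k with rfl | hk
  · refine ⟨1, ?_, one_pow 2⟩
    rw [map_one, eq_comm, ← cycleType_eq_zero, hx, mul_zero, Multiset.replicate_zero]
  have hcard : 2 * (Multiset.replicate (2 * k) 2).sum ≤ Fintype.card α := by
    have h := x.support.card_le_univ
    rw [← sum_cycleType, hx, Multiset.sum_replicate] at h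
    rw [Multiset.sum_replicate]
    simp only [smul_eq_mul] at h ⊢
    omega
  obtain ⟨u, v, huv, hu, hv⟩ := exists_disjoint_cycleType_eq
    (fun a ha => (Multiset.eq_of_mem_replicate ha).ge) hcard
  have heven : ∃ c ∈ u.cycleType, Even c :=
    ⟨2, hu ▸ Multiset.mem_replicate.mpr ⟨by omega, rfl⟩, even_two⟩
  obtain ⟨τ, hτ, hτu⟩ := exists_mem_alternatingGroup_conj_eq (hu.trans hv.symm) heven
  have huv_type : (u * v).cycleType = x.cycleType := by
    rw [huv.cycleType_mul, hu, hv, hx, ← Multiset.replicate_add]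
    ring_nf
  obtain ⟨ρ, hρ, hρx⟩ := exists_mem_alternatingGroup_conj_eq huv_type
    ⟨2, by rw [huv_type, hx]; exact Multiset.mem_replicate.mpr ⟨by omega, rfl⟩, even_two⟩
  have hu_alt : u ∈ alternatingGroup α := by
    rw [mem_alternatingGroup, sign_of_cycleType, hu, Multiset.sum_replicate,
      Multiset.card_replicate]
    simp [pow_add, pow_mul]
  have hu2 : u ^ 2 = 1 :=
    pow_prime_eq_one_iff.mpr fun c hc => Multiset.eq_of_mem_replicate (hu ▸ hc)
  obtain ⟨g, hg, hg2⟩ := exists_involutive_lift_of_disjoint hcen hsq hrange huv hu_alt hτ hτu hu2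
  obtain ⟨r, hr⟩ : ρ ∈ π.range := hrange ▸ hρ
  exact ⟨r * g * r⁻¹, by simp [hr, hg, hρx], by rw [conj_pow, hg2, mul_one, mul_inv_cancel]⟩

end CoveringOfAlternatingGroup

theorem stmt_7_general (n : ℕ) (G : Type*) [Group G]
    (π : G →* Equiv.Perm (Fin n))
    (hperfect : commutator G = ⊤)
    (hker : Nat.card π.ker = 2)
    (hcentral : π.ker ≤ Subgroup.center G)
    (hrange : π.range = alternatingGroup (Fin n))
    (x y : Equiv.Perm (Fin n))
    (hx : orderOf x = 2) (hy : orderOf y = 3) (hxy : orderOf (x * y) = 7)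
    (hgen : Subgroup.closure {x, y} = alternatingGroup (Fin n))
    (hcyc : ∃ k : ℕ, x.cycleType = Multiset.replicate (4 * k) 2) :
    ∃ a b : G, orderOf a = 2 ∧ orderOf b = 3 ∧ orderOf (a * b) = 7 ∧
      Subgroup.closure {a, b} = ⊤ := by
  obtain ⟨k, hk⟩ := hcyc
  have hsq : ∀ z ∈ π.ker, z ^ 2 = 1 := fun z hz => by
    have h := pow_card_eq_one' (x := (⟨z, hz⟩ : π.ker))
    rw [hker] at h
    simpa using congrArg Subtype.val h
  have hy_range : y ∈ π.range := hrange ▸ hgen ▸ subset_closure (by simp)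
  obtain ⟨a₀, ha₀, ha₀2⟩ :=
    exists_involutive_lift_of_cycleType_eq_replicate hcentral hsq hrange hk
  obtain ⟨b, hb, hb3⟩ :=
    exists_lift_pow_eq_one hsq hy_range (by decide) (hy ▸ pow_orderOf_eq_one y)
  obtain ⟨a, ha, ha2, hab7⟩ := exists_lift_mul_pow_eq_one hcentral hsq (a := a₀) (b := b)
    (m := 7) (by decide) (by rw [ha₀, hb, ← hxy]; exact pow_orderOf_eq_one _)
  refine ⟨a, b, orderOf_eq_of_pow_eq_one_of_orderOf_map π (ha2.trans ha₀2) (by rw [ha, ha₀, hx]),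
    orderOf_eq_of_pow_eq_one_of_orderOf_map π hb3 (by rw [hb, hy]),
    orderOf_eq_of_pow_eq_one_of_orderOf_map π hab7 (by rw [map_mul, ha, ha₀, hb, hxy]),
    eq_top_of_map_eq_range hcentral hperfect ?_⟩
  rw [MonoidHom.map_closure, Set.image_pair, ha, ha₀, hb, hgen, hrange]

/-- Let G be a perfect group with a central kernel of order 2 mapping onto
    Alt(n) (n ≥ 8), i.e. the universal covering 2.Alt(n).  If Alt(n) is
    generated by x of order 2, y of order 3 with xy of order 7, where x is a
    product of 4k disjoint transpositions, then G admits a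
    (2,3,7)-generating pair. -/
theorem stmt_7 (n : ℕ) (hn : 8 ≤ n) (G : Type*) [Group G]
    (π : G →* Equiv.Perm (Fin n))
    (hperfect : commutator G = ⊤)
    (hker : Nat.card π.ker = 2)
    (hcentral : π.ker ≤ Subgroup.center G)
    (hrange : π.range = alternatingGroup (Fin n))
    (x y : Equiv.Perm (Fin n))
    (hx : orderOf x = 2) (hy : orderOf y = 3) (hxy : orderOf (x * y) = 7)
    (hgen : Subgroup.closure {x, y} = alternatingGroup (Fin n))
    (hcyc : ∃ k : ℕ, x.cycleType = Multiset.replicate (4 * k) 2) :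
    ∃ a b : G, orderOf a = 2 ∧ orderOf b = 3 ∧ orderOf (a * b) = 7 ∧
      Subgroup.closure {a, b} = ⊤ :=
  stmt_7_general n G π hperfect hker hcentral hrange x y hx hy hxy hgen hcyc
end

section
/- Suppose x, y ∈ Sym(21) satisfy x² = y³ = (xy)⁷ = 1 and ⟨x,y⟩ = Alt(21). Let V be the standard 20-dimensional irreducible ℂ-constituent of the natural permutation module ℂ²¹, and S = Sym²(V) its symmetric square (dim S = 210). If x fixes at least 5 points of {1,…,21}, then dim S^x ≥ 114, dim S^y ≥ 70, dim S^{xy} ≥ 30, and hence dim S^x + dim S^y + dim S^{xy} ≥ 214 > 212 = dim S + 2, contradicting Scott's formula for the irreducible module S. Therefore no Hurwitz generating triple of Alt(21) has its involution fixing 5 or more points. -/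
/-!
Work in the permutation module `V = ℚ^Ω` of `Sym(21)` on the set `Ω` of unordered pairs
`{a, b}` (`a = b` allowed), i.e. `Sym²(ℚ²¹)`, of dimension 231. For `H = ⟨x, y⟩`, Scott's
inequality reads `dim V^x + dim V^y + dim V^{xy} ≤ 2 dim V + dim V^H - dim [V, H]`, where
`[V, H] = Σ range (g - 1)`. In a permutation module, `V^H` and a complement of `[V, H]` both
have dimension the number of `H`-orbits, which is 2 for the 2-transitive group `Alt(21)`
acting on `Ω`; and Burnside's lemma for `⟨g⟩` gives `m · dim V^g ≥ |Ω| + (m - 1) |Fix_Ω g|`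
when `g` has order `m`. An involution with `f ≥ 5` fixed points fixes `(f² + 21) / 2 ≥ 23`
unordered pairs, so `dim V^x ≥ 127`, `dim V^y ≥ 77`, `dim V^{xy} ≥ 33`, and
`127 + 77 + 33 > 462 + 2 - 229`.
-/

open Module LinearMap MulAction Finset

section LinearAlgebra

variable {K V W U : Type*} [Field K] [AddCommGroup V] [Module K V] [AddCommGroup W] [Module K W]
  [AddCommGroup U] [Module K U]

theorem LinearMap.finrank_ker_comp_le [FiniteDimensional K V] [FiniteDimensional K W]
    (f : V →ₗ[K] W) (g : W →ₗ[K] U) :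
    finrank K (ker (g ∘ₗ f)) ≤ finrank K (ker g) + finrank K (ker f) := by
  let r : ker (g ∘ₗ f) →ₗ[K] ker g := f.restrict fun _ hv ↦ hv
  let ι : ker r →ₗ[K] ker f :=
    ((ker (g ∘ₗ f)).subtype ∘ₗ (ker r).subtype).codRestrict (ker f) fun v ↦
      congrArg Subtype.val v.2
  have hι : Function.Injective ι := fun v w h ↦ by
    ext
    exact congrArg (fun z : ker f ↦ (z : V)) h
  calc finrank K (ker (g ∘ₗ f)) = finrank K (range r) + finrank K (ker r) :=
        (finrank_range_add_finrank_ker r).symm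
    _ ≤ finrank K (ker g) + finrank K (ker f) :=
        add_le_add (Submodule.finrank_le _) (finrank_le_finrank_of_injective hι)

theorem Module.End.scott_inequality [FiniteDimensional K V] (g h : Module.End K V) :
    finrank K (ker (g - 1)) + finrank K (ker (h - 1)) + finrank K (ker (g * h - 1)) +
        finrank K (range (g - 1) ⊔ range (h - 1) : Submodule K V) ≤
      2 * finrank K V + finrank K (ker (g - 1) ⊓ ker (h - 1) : Submodule K V) := by
  set A := g - 1
  set B := h - 1
  -- `g h - 1 = (g - 1) h + (h - 1)` factors through `range A × range B`.
  let φ : V →ₗ[K] range A × range B :=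
    ((A ∘ₗ h).codRestrict (range A) fun v ↦ mem_range_self A (h v)).prod B.rangeRestrict
  let s : range A × range B →ₗ[K] V := (range A).subtype.coprod (range B).subtype
  have hsφ : s ∘ₗ φ = g * h - 1 := by
    ext v
    simp [s, φ, A, B]
  have hkerφ : ker φ ≤ ker A ⊓ ker B := by
    intro v hv
    simp only [φ, ker_prod, Submodule.mem_inf, mem_ker, ker_codRestrict, comp_apply] at hv
    have hhv : h v = v := sub_eq_zero.mp hv.2
    exact ⟨by simpa [hhv] using hv.1, hv.2⟩
  have hrange : range s = range A ⊔ range B := by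
    simp [s, range_coprod]
  have hs := finrank_range_add_finrank_ker s
  rw [hrange, finrank_prod] at hs
  have hcomp := finrank_ker_comp_le φ s
  rw [hsφ] at hcomp
  have hI := Submodule.finrank_mono hkerφ
  have hA := finrank_range_add_finrank_ker A
  have hB := finrank_range_add_finrank_ker B
  omega

end LinearAlgebra

namespace Representation

variable {k G V : Type*} [CommRing k] [Group G] [AddCommGroup V] [Module k V]
  (ρ : Representation k G V) (S : Set G)

theorem mem_ker_sub_one_iff {g : G} {v : V} : v ∈ ker (ρ g - 1) ↔ ρ g v = v := by
  simp [sub_eq_zero]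

theorem iInf_ker_sub_one_closure :
    ⨅ g ∈ Subgroup.closure S, ker (ρ g - 1) = ⨅ s ∈ S, ker (ρ s - 1) := by
  refine le_antisymm (biInf_mono fun _ h ↦ Subgroup.subset_closure h)
    (le_iInf₂ fun g hg v hv ↦ ?_)
  simp only [Submodule.mem_iInf, mem_ker_sub_one_iff] at hv ⊢
  induction hg using Subgroup.closure_induction with
  | mem s hs => exact hv s hs
  | one => simp
  | mul a b _ _ ha hb => rw [map_mul, Module.End.mul_apply, hb, ha]
  | inv a _ ha => rw [← congrArg (ρ a⁻¹) ha, ← Module.End.mul_apply, ← map_mul, inv_mul_cancel,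
      map_one, Module.End.one_apply]

theorem iSup_range_sub_one_closure :
    ⨆ g ∈ Subgroup.closure S, range (ρ g - 1) = ⨆ s ∈ S, range (ρ s - 1) := by
  refine le_antisymm (iSup₂_le fun g hg ↦ ?_) (biSup_mono fun _ h ↦ Subgroup.subset_closure h)
  rintro _ ⟨v, rfl⟩
  set W := ⨆ s ∈ S, range (ρ s - 1)
  induction hg using Subgroup.closure_induction generalizing v with
  | mem s hs => exact (le_biSup (fun s ↦ range (ρ s - 1)) hs) (mem_range_self _ v)
  | one => simp
  | mul a b _ _ ha hb =>
    have : (ρ (a * b) - 1) v = (ρ a - 1) (ρ b v) + (ρ b - 1) v := by simp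
    exact this ▸ W.add_mem (ha _) (hb v)
  | inv a _ ha =>
    have : (ρ a⁻¹ - 1) v = -(ρ a - 1) (ρ a⁻¹ v) := by
      simp [← Module.End.mul_apply, ← map_mul]
    exact this ▸ W.neg_mem (ha _)

end Representation

theorem MulAction.natCard_fixedBy {M α : Type*} [Monoid M] [MulAction M α] [Fintype α]
    [DecidableEq α] (m : M) : Nat.card (fixedBy α m) = #{a : α | m • a = a} := by
  rw [Nat.card_eq_fintype_card, Fintype.card_subtype]
  rfl

section Burnside

open Subgroup

variable {G α : Type*} [Group G] [MulAction G α]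

theorem MulAction.card_add_mul_card_fixedBy_le [Finite α] {g : G} (hg : IsOfFinOrder g) :
    Nat.card α + (orderOf g - 1) * Nat.card (fixedBy α g) ≤
      orderOf g * Nat.card (orbitRel.Quotient (zpowers g) α) := by
  classical
  have : Finite (zpowers g) :=
    Nat.finite_of_card_ne_zero (Nat.card_zpowers g ▸ (orderOf_pos_iff.mpr hg).ne')
  have := Fintype.ofFinite α
  have := Fintype.ofFinite (zpowers g)
  have hburnside := sum_card_fixedBy_eq_card_orbits_mul_card_group (zpowers g) α
  simp only [← Nat.card_eq_fintype_card, Nat.card_zpowers] at hburnside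
  have hfix : ∀ h : zpowers g, Nat.card (fixedBy α g) ≤ Nat.card (fixedBy α h) := by
    rintro ⟨_, k, rfl⟩
    exact Nat.card_mono (Set.toFinite _) (fixedBy_subset_fixedBy_zpow α g k)
  have hrest := card_nsmul_le_sum (univ.erase (1 : zpowers g)) _ _ fun h _ ↦ hfix h
  rw [card_erase_of_mem (mem_univ _), card_univ, ← Nat.card_eq_fintype_card, Nat.card_zpowers,
    smul_eq_mul] at hrest
  calc Nat.card α + (orderOf g - 1) * Nat.card (fixedBy α g)
      ≤ Nat.card (fixedBy α (1 : zpowers g)) +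
          ∑ h ∈ univ.erase (1 : zpowers g), Nat.card (fixedBy α h) := by
        rw [fixedBy_one_eq_univ, Nat.card_univ]
        exact Nat.add_le_add_left hrest _
    _ = orderOf g * Nat.card (orbitRel.Quotient (zpowers g) α) := by
      rw [add_sum_erase _ (fun h : zpowers g ↦ Nat.card (fixedBy α h)) (mem_univ 1), hburnside,
        mul_comm]

end Burnside

section PermutationModule

variable (K G α : Type*) [Field K] [Group G] [MulAction G α]

noncomputable def permRep : Representation K G (α → K) where
  toFun g := funLeft K K (g⁻¹ • ·)
  map_one' := by ext; simp
  map_mul' g h := by ext; simp [mul_smul]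

variable {K G α}

@[simp]
theorem permRep_apply (g : G) (f : α → K) (a : α) : permRep K G α g f a = f (g⁻¹ • a) := rfl

theorem permRep_single [DecidableEq α] (g : G) (a : α) :
    permRep K G α g (Pi.single a 1) = Pi.single (g • a) 1 := by
  ext b
  simp only [permRep_apply, Pi.single_apply, inv_smul_eq_iff]

theorem mem_iInf_ker_permRep_sub_one_iff (H : Subgroup G) (f : α → K) :
    f ∈ ⨅ h ∈ H, ker (permRep K G α h - 1) ↔ ∀ h ∈ H, ∀ a, f (h • a) = f a := by
  simp only [Submodule.mem_iInf, mem_ker, LinearMap.sub_apply, Module.End.one_apply, sub_eq_zero,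
    funext_iff, permRep_apply]
  exact ⟨fun hf h hh a ↦ by simpa using (hf h⁻¹ (inv_mem hh) a),
    fun hf h hh a ↦ hf h⁻¹ (inv_mem hh) a⟩

variable [Finite α]

theorem finrank_iInf_ker_permRep_sub_one (H : Subgroup G) :
    finrank K (⨅ h ∈ H, ker (permRep K G α h - 1) : Submodule K (α → K)) =
      Nat.card (orbitRel.Quotient H α) := by
  let π := funLeft K K (Quotient.mk (orbitRel H α))
  have hπ : range π = ⨅ h ∈ H, ker (permRep K G α h - 1) := by
    ext f
    rw [mem_iInf_ker_permRep_sub_one_iff]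
    constructor
    · rintro ⟨φ, rfl⟩ h hh a
      exact congrArg φ (Quotient.sound (mem_orbit a (⟨h, hh⟩ : H)))
    · intro hf
      refine ⟨Quotient.lift f ?_, rfl⟩
      rintro a _ ⟨⟨h, hh⟩, rfl⟩
      exact hf h hh _
  have := Fintype.ofFinite (orbitRel.Quotient H α)
  rw [← hπ, finrank_range_of_inj (funLeft_injective_of_surjective K K _ Quotient.mk_surjective),
    Module.finrank_pi, Nat.card_eq_fintype_card]

theorem finrank_le_finrank_iSup_range_permRep_sub_one_add_card (H : Subgroup G) :
    finrank K (α → K) ≤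
      finrank K (⨆ h ∈ H, range (permRep K G α h - 1) : Submodule K (α → K)) +
        Nat.card (orbitRel.Quotient H α) := by
  classical
  have := Fintype.ofFinite α
  have := Fintype.ofFinite (orbitRel.Quotient H α)
  set W := ⨆ h ∈ H, range (permRep K G α h - 1)
  set U := Submodule.span K
    (Set.range fun q : orbitRel.Quotient H α ↦ (Pi.single q.out 1 : α → K))
  have hWU : W ⊔ U = ⊤ := by
    refine eq_top_iff.mpr ((Pi.basisFun K α).span_eq ▸ Submodule.span_le.mpr ?_)
    rintro _ ⟨a, rfl⟩
    set b := (⟦a⟧ : orbitRel.Quotient H α).out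
    obtain ⟨⟨h, hh⟩, hab⟩ : ∃ h : H, h • a = b := Quotient.mk_out (s := orbitRel H α) a
    have hsplit :
        Pi.single a (1 : K) = (permRep K G α h⁻¹ - 1) (Pi.single b 1) + Pi.single b 1 := by
      rw [LinearMap.sub_apply, Module.End.one_apply, permRep_single, sub_add_cancel, ← hab,
        Subgroup.mk_smul, inv_smul_smul]
    rw [Pi.basisFun_apply, hsplit]
    exact Submodule.add_mem_sup
      ((le_biSup (fun h ↦ range (permRep K G α h - 1)) (inv_mem hh)) (mem_range_self _ _))
      (Submodule.subset_span ⟨_, rfl⟩)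
  calc finrank K (α → K) = finrank K (W ⊔ U : Submodule K (α → K)) := by rw [hWU, finrank_top]
    _ ≤ finrank K W + finrank K U := Submodule.finrank_add_le_finrank_add_finrank W U
    _ ≤ finrank K W + Nat.card (orbitRel.Quotient H α) := by
      rw [Nat.card_eq_fintype_card]
      exact Nat.add_le_add_left (finrank_range_le_card _) _

theorem card_add_mul_card_fixedBy_le_mul_finrank_ker_permRep {g : G} (hg : IsOfFinOrder g) :
    Nat.card α + (orderOf g - 1) * Nat.card (fixedBy α g) ≤
      orderOf g * finrank K (ker (permRep K G α g - 1)) := by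
  have hcyc := (permRep K G α).iInf_ker_sub_one_closure {g}
  rw [_root_.iInf_singleton, ← Subgroup.zpowers_eq_closure] at hcyc
  rw [← hcyc, finrank_iInf_ker_permRep_sub_one]
  exact card_add_mul_card_fixedBy_le hg

end PermutationModule

namespace Sym2

section MulAction

variable {M α : Type*} [Monoid M] [MulAction M α]

instance : MulAction M (Sym2 α) where
  smul m := Sym2.map (m • ·)
  one_smul := Sym2.ind fun a b ↦ by
    change s((1 : M) • a, (1 : M) • b) = s(a, b)
    rw [one_smul, one_smul]
  mul_smul m n := Sym2.ind fun a b ↦ by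
    change s((m * n) • a, (m * n) • b) = s(m • n • a, m • n • b)
    rw [mul_smul, mul_smul]

@[simp]
theorem smul_mk (m : M) (a b : α) : m • s(a, b) = s(m • a, m • b) := rfl

end MulAction

variable {G α : Type*} [Group G] [MulAction G α]

theorem isDiag_smul_iff (g : G) (z : Sym2 α) : (g • z).IsDiag ↔ z.IsDiag :=
  isDiag_map (MulAction.injective g)

theorem mem_orbit_of_isDiag_iff [IsMultiplyPretransitive G α 2] {z w : Sym2 α}
    (h : z.IsDiag ↔ w.IsDiag) : z ∈ orbit G w := by
  have := isPretransitive_of_is_two_pretransitive (G := G) (α := α)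
  induction z using Sym2.ind with | _ a b =>
  induction w using Sym2.ind with | _ c d =>
  simp only [mk_isDiag_iff] at h
  by_cases hab : a = b
  · obtain rfl := hab
    obtain rfl := h.mp rfl
    obtain ⟨g, hg⟩ := exists_smul_eq G c a
    exact ⟨g, by simp [hg]⟩
  · obtain ⟨g, hga, hgb⟩ := is_two_pretransitive_iff.mp ‹_› (mt h.mpr hab) hab
    exact ⟨g, by simp [hga, hgb]⟩

theorem card_orbitRel_quotient_le_two [Finite α] [IsMultiplyPretransitive G α 2] :
    Nat.card (orbitRel.Quotient G (Sym2 α)) ≤ 2 := by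
  let d : orbitRel.Quotient G (Sym2 α) → Prop :=
    Quotient.lift IsDiag fun _ _ ⟨g, hg⟩ ↦ propext (hg ▸ isDiag_smul_iff g _)
  have hd : Function.Injective d := by
    rintro ⟨z⟩ ⟨w⟩ h
    exact Quotient.sound (mem_orbit_of_isDiag_iff (iff_of_eq h))
  simpa using Nat.card_le_card_of_injective d hd

theorem card_add_sq_card_fixedBy_le [Finite α] {g : G} (hg : g ^ 2 = 1) :
    Nat.card α + Nat.card (fixedBy α g) ^ 2 ≤ 2 * Nat.card (fixedBy (Sym2 α) g) := by
  classical
  have := Fintype.ofFinite α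
  have hgg : ∀ a : α, g • g • a = a := fun a ↦ by rw [smul_smul, ← sq, hg, one_smul]
  set F : Finset α := {a | g • a = a}
  -- fixed unordered pairs: pairs of fixed points, and the 2-cycles `{a, g a}` of `g`
  set E := F.sym2
  set C := Fᶜ.image fun a ↦ s(a, g • a)
  have hE : 2 * #E = #F * (#F + 1) := by
    rw [card_sym2, mul_comm, ← Nat.add_one_mul_choose_eq, Nat.choose_one_right, mul_comm]
  have hC : #Fᶜ ≤ 2 * #C := by
    refine card_le_mul_card_image _ 2 fun z hz ↦ ?_
    obtain ⟨a, -, rfl⟩ := mem_image.mp hz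
    calc #{b ∈ Fᶜ | s(b, g • b) = s(a, g • a)} ≤ #{a, g • a} := card_le_card fun b hb ↦ by
          rcases Sym2.eq_iff.mp (mem_filter.mp hb).2 with ⟨rfl, -⟩ | ⟨rfl, -⟩ <;> simp
      _ ≤ 2 := card_le_two
  have hEC : Disjoint E C := by
    refine disjoint_left.mpr fun z hzE hzC ↦ ?_
    obtain ⟨a, ha, rfl⟩ := mem_image.mp hzC
    exact mem_compl.mp ha (mem_sym2_iff.mp hzE a (mem_mk_left _ _))
  have hfix : E ∪ C ⊆ ({z | g • z = z} : Finset (Sym2 α)) := by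
    intro z hz
    rw [mem_filter]
    refine ⟨mem_univ _, ?_⟩
    rcases mem_union.mp hz with hz | hz
    · induction z using Sym2.ind with | _ a b =>
      have hab := mem_sym2_iff.mp hz
      rw [smul_mk, (mem_filter.mp (hab a (mem_mk_left _ _))).2,
        (mem_filter.mp (hab b (mem_mk_right _ _))).2]
    · obtain ⟨a, -, rfl⟩ := mem_image.mp hz
      rw [smul_mk, hgg, eq_swap]
  have hα : Nat.card α = #F + #Fᶜ := by
    rw [card_compl, Nat.card_eq_fintype_card]
    have := card_le_univ F
    omega
  have hfixSym2 : #E + #C ≤ Nat.card (fixedBy (Sym2 α) g) := by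
    rw [natCard_fixedBy, ← card_union_of_disjoint hEC]
    exact card_le_card hfix
  rw [hα, natCard_fixedBy]
  nlinarith

end Sym2

/-- No Hurwitz (i.e. (2,3,7)-) generating triple of Alt(21) has its
    involution fixing 5 or more points.  (This is the conclusion of the
    Scott-formula argument on the symmetric square of the 20-dimensional
    irreducible constituent of the natural permutation module ℂ²¹.) -/
theorem stmt_19 (x y : Equiv.Perm (Fin 21))
    (hx : orderOf x = 2) (hy : orderOf y = 3) (hxy : orderOf (x * y) = 7)
    (hgen : Subgroup.closure {x, y} = alternatingGroup (Fin 21)) :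
    ¬ (5 ≤ (Finset.univ.filter fun a => x a = a).card) := by
  intro h5
  have hcard : Nat.card (Sym2 (Fin 21)) = 231 := by
    rw [Nat.card_eq_fintype_card, Sym2.card, Fintype.card_fin]
    rfl
  have hfix : 23 ≤ Nat.card (fixedBy (Sym2 (Fin 21)) x) := by
    have := Sym2.card_add_sq_card_fixedBy_le (α := Fin 21) (hx ▸ pow_orderOf_eq_one x)
    rw [natCard_fixedBy, Nat.card_eq_fintype_card, Fintype.card_fin] at this
    simp only [Equiv.Perm.smul_def] at this
    nlinarith
  have hfixedDim := fun (g : Equiv.Perm (Fin 21)) (hg : 0 < orderOf g) ↦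
    card_add_mul_card_fixedBy_le_mul_finrank_ker_permRep (K := ℚ) (α := Sym2 (Fin 21))
      (orderOf_pos_iff.mp hg)
  have hX := hfixedDim x (by omega)
  have hY := hfixedDim y (by omega)
  have hXY := hfixedDim (x * y) (by omega)
  rw [hx, hcard] at hX
  rw [hy, hcard] at hY
  rw [hxy, hcard] at hXY
  have horbits : Nat.card (orbitRel.Quotient (Subgroup.closure {x, y}) (Sym2 (Fin 21))) ≤ 2 := by
    have := alternatingGroup.isMultiplyPretransitive (Fin 21)
    have : IsMultiplyPretransitive (alternatingGroup (Fin 21)) (Fin 21) 2 :=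
      isMultiplyPretransitive_of_le (n := Nat.card (Fin 21) - 2) (by simp) (by simp)
    rw [hgen]
    exact Sym2.card_orbitRel_quotient_le_two
  have hfixed := finrank_iInf_ker_permRep_sub_one (K := ℚ) (α := Sym2 (Fin 21))
    (Subgroup.closure {x, y})
  rw [Representation.iInf_ker_sub_one_closure, iInf_pair] at hfixed
  have hcofixed := finrank_le_finrank_iSup_range_permRep_sub_one_add_card (K := ℚ)
    (α := Sym2 (Fin 21)) (Subgroup.closure {x, y})
  rw [Representation.iSup_range_sub_one_closure, iSup_pair, finrank_fintype_fun_eq_card,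
    ← Nat.card_eq_fintype_card, hcard] at hcofixed
  have hscott := Module.End.scott_inequality (permRep ℚ _ (Sym2 (Fin 21)) x) (permRep ℚ _ _ y)
  rw [← map_mul, finrank_fintype_fun_eq_card, ← Nat.card_eq_fintype_card, hcard] at hscott
  omega
end
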